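/- arXiv:1912.04901 — 2 statements merged into one kernel-verified Lean document; each statement's English description precedes it below -/
import Mathlib

section
/- Let X be a barrelled topological vector space over ℝ, Y a locally convex topological vector space over ℝ, and Γ a linear subspace of X × Y with Dom Γ = X. Then for every neighbourhood B of 0 in Y, the closure of Γ B = {x : ∃ b ∈ B, (x, b) ∈ Γ} is a neighbourhood of 0 in X. -/
/-!
Shrink `B` to an absolutely convex neighbourhood `B₀` of `0`. Since `Γ` is a linear subspace, the
set `Γ B₀` is absolutely convex, and it is absorbent because every `x` has some `(x, y) ∈ Γ` and
`B₀` absorbs `y`. Its closure is therefore a barrel, hence a neighbourhood of `0` in the barrelled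
space `X`.
-/

open Set Filter Topology Pointwise

section Barrel

variable {X : Type*} [AddCommGroup X] [Module ℝ X] [TopologicalSpace X] [ContinuousConstSMul ℝ X]
  {C : Set X}

theorem lowerSemicontinuous_gauge_of_isClosed (hconv : Convex ℝ C) (habs : Absorbent ℝ C)
    (hcl : IsClosed C) : LowerSemicontinuous (gauge C) := by
  refine lowerSemicontinuous_iff_isClosed_preimage.mpr fun a ↦ ?_
  rcases lt_or_ge a 0 with ha | ha
  · convert isClosed_empty
    exact eq_empty_of_forall_notMem fun x hx ↦ (gauge_nonneg x).not_gt (lt_of_le_of_lt hx ha)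
  · change IsClosed {x | gauge C x ≤ a}
    rw [setOfPred_gauge_le_eq hconv habs.zero_mem habs ha]
    exact isClosed_biInter fun r hr ↦ hcl.smul_of_ne_zero (ha.trans_lt hr).ne'

/-- The classical definition of barrelledness, recovered from `BarrelledSpace` (lower semicontinuous
seminorms are continuous) through the gauge of the barrel. -/
theorem BarrelledSpace.mem_nhds_zero_of_isClosed [BarrelledSpace ℝ X] (hbal : Balanced ℝ C)
    (hconv : Convex ℝ C) (habs : Absorbent ℝ C) (hcl : IsClosed C) : C ∈ 𝓝 (0 : X) := by
  have hcont : Continuous (gaugeSeminorm hbal hconv habs) :=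
    Seminorm.continuous_of_lowerSemicontinuous _
      (lowerSemicontinuous_gauge_of_isClosed hconv habs hcl)
  refine mem_of_superset (Seminorm.ball_mem_nhds hcont one_pos) ?_
  rw [Seminorm.ball_zero_eq]
  exact setOfPred_gauge_lt_one_subset_self hconv habs.zero_mem habs

end Barrel

namespace SetRel

variable {𝕜 X Y : Type*} [AddCommGroup X] [AddCommGroup Y] {B : Set Y}

theorem balanced_preimage_submodule [NormedField 𝕜] [Module 𝕜 X] [Module 𝕜 Y]
    (Γ : Submodule 𝕜 (X × Y)) (hB : Balanced 𝕜 B) :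
    Balanced 𝕜 (SetRel.preimage (Γ : SetRel X Y) B) := by
  rintro a ha _ ⟨x, ⟨b, hb, hxb⟩, rfl⟩
  exact ⟨a • b, hB a ha (smul_mem_smul_set hb), Γ.smul_mem a hxb⟩

theorem convex_preimage_submodule [Semiring 𝕜] [PartialOrder 𝕜] [Module 𝕜 X] [Module 𝕜 Y]
    (Γ : Submodule 𝕜 (X × Y)) (hB : Convex 𝕜 B) :
    Convex 𝕜 (SetRel.preimage (Γ : SetRel X Y) B) := by
  rintro x₁ ⟨b₁, hb₁, h₁⟩ x₂ ⟨b₂, hb₂, h₂⟩ s t hs ht hst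
  exact ⟨s • b₁ + t • b₂, hB hb₁ hb₂ hs ht hst, Γ.add_mem (Γ.smul_mem s h₁) (Γ.smul_mem t h₂)⟩

theorem absorbent_preimage_submodule [NormedField 𝕜] [Module 𝕜 X] [Module 𝕜 Y]
    (Γ : Submodule 𝕜 (X × Y)) (hdom : ∀ x : X, ∃ y : Y, (x, y) ∈ Γ) (hB : Absorbent 𝕜 B) :
    Absorbent 𝕜 (SetRel.preimage (Γ : SetRel X Y) B) := by
  intro x
  obtain ⟨y, hxy⟩ := hdom x
  filter_upwards [hB.absorbs (x := y), Bornology.eventually_ne_cobounded 0] with c hc hc₀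
  obtain ⟨b, hb, hcb⟩ := singleton_subset_iff.mp hc
  refine singleton_subset_iff.mpr ⟨c⁻¹ • x, ⟨b, hb, ?_⟩, smul_inv_smul₀ hc₀ x⟩
  simpa [← hcb, hc₀] using Γ.smul_mem c⁻¹ hxy

end SetRel

theorem stmt_6_general {X Y : Type*}
    [AddCommGroup X] [Module ℝ X] [TopologicalSpace X] [IsTopologicalAddGroup X]
    [ContinuousSMul ℝ X] [BarrelledSpace ℝ X]
    [AddCommGroup Y] [Module ℝ Y] [TopologicalSpace Y]
    [ContinuousSMul ℝ Y] [LocallyConvexSpace ℝ Y]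
    (Γ : Submodule ℝ (X × Y)) (hdom : ∀ x : X, ∃ y : Y, (x, y) ∈ Γ)
    (B : Set Y) (hB : B ∈ nhds (0 : Y)) :
    closure {x : X | ∃ b ∈ B, (x, b) ∈ Γ} ∈ nhds (0 : X) := by
  obtain ⟨B₀, ⟨hB₀, hB₀bal, hB₀conv⟩, hB₀B⟩ := (nhds_hasBasis_absConvex ℝ Y).mem_iff.mp hB
  have hS : closure (SetRel.preimage (Γ : SetRel X Y) B₀) ∈ 𝓝 (0 : X) :=
    BarrelledSpace.mem_nhds_zero_of_isClosed
      (SetRel.balanced_preimage_submodule Γ hB₀bal).closure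
      (SetRel.convex_preimage_submodule Γ hB₀conv).closure
      ((SetRel.absorbent_preimage_submodule Γ hdom (absorbent_nhds_zero hB₀)).mono subset_closure)
      isClosed_closure
  exact mem_of_superset hS (closure_mono fun x ⟨b, hb, hxb⟩ ↦ ⟨b, hB₀B hb, hxb⟩)

theorem stmt_6 {X Y : Type*}
    [AddCommGroup X] [Module ℝ X] [TopologicalSpace X] [IsTopologicalAddGroup X]
    [ContinuousSMul ℝ X] [LocallyConvexSpace ℝ X] [BarrelledSpace ℝ X]
    [AddCommGroup Y] [Module ℝ Y] [TopologicalSpace Y] [IsTopologicalAddGroup Y]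
    [ContinuousSMul ℝ Y] [LocallyConvexSpace ℝ Y]
    (Γ : Submodule ℝ (X × Y)) (hdom : ∀ x : X, ∃ y : Y, (x, y) ∈ Γ)
    (B : Set Y) (hB : B ∈ nhds (0 : Y)) :
    closure {x : X | ∃ b ∈ B, (x, b) ∈ Γ} ∈ nhds (0 : X) :=
  stmt_6_general Γ hdom B hB
end

section
/- Let X be a Hausdorff barrelled locally convex space over ℝ and Y a Banach space. If Γ ⊆ X × Y is a closed linear subspace with Dom Γ = X, then for every open set B ⊆ Y, the set Γ B = {x ∈ X : ∃ b ∈ B, (x, b) ∈ Γ} is open in X. -/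
/-!
Let `K = {y | (0, y) ∈ Γ}`, a closed subspace of `Y`. Because `Γ` is defined on all of `X`,
sending `x` to the class of any `y` with `(x, y) ∈ Γ` is a well-defined linear map
`T : X → Y ⧸ K`; its graph is the image of `Γ` under the open quotient map `id × mkQ`, hence
closed, and `Γ B = T⁻¹ (mkQ B)` is open as soon as `T` is continuous.

That is the closed graph theorem for a barrelled domain and a Banach codomain. The closure of
`T⁻¹ (ball 0 r)` is a barrel, hence a neighbourhood of `0` (its gauge is a lower semicontinuous
seminorm). Approximating a point of it by a series `∑ uₙ` with `‖T uₙ‖ < r / 2ⁿ`, as in the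
proof of the open mapping theorem, the closed graph forces `‖T x‖ ≤ 2 r`.
-/

open Filter Topology Set Metric
open scoped Pointwise

section Gauge

variable {E : Type*} [AddCommGroup E] [Module ℝ E] [TopologicalSpace E] [ContinuousSMul ℝ E]
  {s : Set E}

theorem gauge_le_iff_mem_smul_of_isClosed (hc : Convex ℝ s) (ha : Absorbent ℝ s)
    (hs : IsClosed s) {c : ℝ} (hc₀ : 0 < c) (x : E) : gauge s x ≤ c ↔ x ∈ c • s := by
  have hmem : ∀ y, gauge s y ≤ 1 ↔ y ∈ s := fun y =>
    ⟨fun h => hs.closure_eq ▸ mem_closure_of_gauge_le_one hc ha.zero_mem ha h,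
      gauge_le_one_of_mem⟩
  rw [mem_smul_set_iff_inv_smul_mem₀ hc₀.ne', ← hmem, gauge_smul_of_nonneg (inv_nonneg.2 hc₀.le),
    smul_eq_mul, inv_mul_le_iff₀ hc₀, mul_one]

theorem lowerSemicontinuous_gauge (hconv : Convex ℝ s) (ha : Absorbent ℝ s) (hs : IsClosed s) :
    LowerSemicontinuous (gauge s) := by
  refine lowerSemicontinuous_iff_isClosed_preimage.2 fun y => ?_
  rcases lt_or_ge y 0 with hy | hy
  · convert isClosed_empty
    exact eq_empty_of_forall_notMem fun x hx => (hy.trans_le (gauge_nonneg x)).not_ge hx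
  · have hIic : gauge s ⁻¹' Iic y = ⋂ c ∈ Ioi y, c • s := by
      ext x
      simp only [mem_preimage, mem_Iic, mem_iInter, mem_Ioi]
      refine ⟨fun hx c hc => ?_, fun hx => le_of_forall_gt_imp_ge_of_dense fun c hc => ?_⟩
      · exact (gauge_le_iff_mem_smul_of_isClosed hconv ha hs (hy.trans_lt hc) x).1
          (hx.trans hc.le)
      · exact (gauge_le_iff_mem_smul_of_isClosed hconv ha hs (hy.trans_lt hc) x).2 (hx c hc)
    rw [hIic]
    exact isClosed_biInter fun c hc => hs.smul_of_ne_zero (hy.trans_lt hc).ne'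

end Gauge

section Barrelled

variable {E : Type*} [AddCommGroup E] [Module ℝ E] [TopologicalSpace E] [ContinuousSMul ℝ E]
  [BarrelledSpace ℝ E]

theorem BarrelledSpace.mem_nhds_zero {s : Set E} (hc : Convex ℝ s) (hb : Balanced ℝ s)
    (ha : Absorbent ℝ s) (hs : IsClosed s) : s ∈ 𝓝 0 := by
  have hp : Continuous (gaugeSeminorm hb hc ha) :=
    Seminorm.continuous_of_lowerSemicontinuous _ (lowerSemicontinuous_gauge hc ha hs)
  exact mem_of_superset (Seminorm.ball_mem_nhds hp one_pos) fun x hx =>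
    setOfPred_gauge_lt_one_subset_self hc ha.zero_mem ha (by simpa using hx)

theorem Seminorm.closure_ball_zero_mem_nhds [IsTopologicalAddGroup E] (p : Seminorm ℝ E)
    {r : ℝ} (hr : 0 < r) : closure (p.ball 0 r) ∈ 𝓝 0 :=
  BarrelledSpace.mem_nhds_zero (p.convex_ball 0 r).closure (p.balanced_ball_zero r).closure
    ((p.absorbent_ball_zero hr).mono subset_closure) isClosed_closure

end Barrelled

theorem exists_seq_sub_sum_mem {G : Type*} [AddCommGroup G] {A : ℕ → Set G} {P : ℕ → G → Prop}
    (h : ∀ n, ∀ y ∈ A n, ∃ u, P n u ∧ y - u ∈ A (n + 1)) {x : G} (hx : x ∈ A 0) :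
    ∃ u : ℕ → G, (∀ n, P n (u n)) ∧ ∀ n, x - ∑ k ∈ Finset.range n, u k ∈ A n := by
  choose g hgP hgA using h
  let y : (n : ℕ) → A n := fun n => Nat.rec ⟨x, hx⟩ (fun k z => ⟨z - g k z z.2, hgA k z z.2⟩) n
  let u : ℕ → G := fun n => g n (y n).1 (y n).2
  refine ⟨u, fun n => hgP n (y n).1 (y n).2, fun n => ?_⟩
  suffices (y n).1 = x - ∑ k ∈ Finset.range n, u k by
    rw [← this]
    exact (y n).2
  induction n with
  | zero => simp [y]
  | succ n ih => rw [Finset.sum_range_succ, sub_add_eq_sub_sub, ← ih]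

namespace LinearMap

section ClosedGraph

variable {X Z : Type*} [AddCommGroup X] [Module ℝ X] [TopologicalSpace X]
  [IsTopologicalAddGroup X] [NormedAddCommGroup Z] [NormedSpace ℝ Z] (T : X →ₗ[ℝ] Z)

theorem apply_eq_of_isClosed_graph (hT : IsClosed (T.graph : Set (X × Z))) {x : X} {z : Z}
    (h : ∀ ε > 0, ∃ y ∈ closure (T ⁻¹' ball 0 ε), dist (T (x - y)) z < ε) : T x = z := by
  suffices (x, z) ∈ closure (T.graph : Set (X × Z)) by
    rw [hT.closure_eq] at this
    exact ((T.mem_graph_iff _).1 this).symm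
  rw [mem_closure_iff_nhds_basis ((𝓝 x).basis_sets.prod_nhds nhds_basis_ball)]
  rintro ⟨U, ε⟩ ⟨hU, hε⟩
  obtain ⟨y, hy, hyz⟩ := h (ε / 2) (half_pos hε)
  have hUy : (x - y + ·) ⁻¹' U ∈ 𝓝 y :=
    (continuous_const_add (x - y)).continuousAt.preimage_mem_nhds (by simpa using hU)
  obtain ⟨u, huU, hu⟩ := mem_closure_iff_nhds.1 hy _ hUy
  refine ⟨(x - y + u, T (x - y + u)), (T.mem_graph_iff _).2 rfl, huU, ?_⟩
  rw [mem_preimage, mem_ball_zero_iff] at hu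
  calc dist (T (x - y + u)) z ≤ dist (T (x - y)) z + ‖T u‖ := by
        rw [map_add, dist_eq_norm, dist_eq_norm, add_sub_right_comm]
        exact norm_add_le _ _
    _ < ε / 2 + ε / 2 := add_lt_add hyz hu
    _ = ε := add_halves ε

theorem closure_preimage_ball_subset [CompleteSpace Z] (hT : IsClosed (T.graph : Set (X × Z)))
    (hnhds : ∀ r > 0, closure (T ⁻¹' ball 0 r) ∈ 𝓝 0) {r : ℝ} (hr : 0 < r) :
    closure (T ⁻¹' ball 0 r) ⊆ T ⁻¹' closedBall 0 (2 * r) := by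
  intro x hx
  set ε : ℕ → ℝ := fun n => r * (1 / 2) ^ n
  have hε : ∀ n, 0 < ε n := fun n => by positivity
  have hε_summable : Summable ε := summable_geometric_two.mul_left r
  have step : ∀ n, ∀ y ∈ closure (T ⁻¹' ball 0 (ε n)),
      ∃ u, ‖T u‖ < ε n ∧ y - u ∈ closure (T ⁻¹' ball 0 (ε (n + 1))) := by
    intro n y hy
    obtain ⟨u, hu, hyu⟩ :=
      mem_closure_iff_nhds_zero.1 hy _ (neg_mem_nhds_zero X (hnhds _ (hε (n + 1))))
    exact ⟨u, mem_ball_zero_iff.1 hu, by simpa using hyu⟩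
  obtain ⟨u, hu, hxu⟩ := exists_seq_sub_sum_mem step (by simpa [ε] using hx)
  have hsum : Summable fun n => ‖T (u n)‖ :=
    .of_nonneg_of_le (fun n => norm_nonneg _) (fun n => (hu n).le) hε_summable
  have hTx : T x = ∑' n, T (u n) := by
    refine T.apply_eq_of_isClosed_graph hT fun δ hδ => ?_
    have h₁ : ∀ᶠ n in atTop, dist (∑ k ∈ Finset.range n, T (u k)) (∑' n, T (u n)) < δ :=
      hsum.of_norm.hasSum.tendsto_sum_nat.eventually (ball_mem_nhds _ hδ)
    have h₂ : ∀ᶠ n in atTop, ε n ≤ δ :=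
      hε_summable.tendsto_atTop_zero.eventually (ge_mem_nhds hδ)
    obtain ⟨n, h₁n, h₂n⟩ := (h₁.and h₂).exists
    refine ⟨x - ∑ k ∈ Finset.range n, u k,
      closure_mono (preimage_mono (ball_subset_ball h₂n)) (hxu n), ?_⟩
    simpa [map_sum] using h₁n
  rw [mem_preimage, mem_closedBall_zero_iff, hTx]
  calc ‖∑' n, T (u n)‖ ≤ ∑' n, ‖T (u n)‖ := norm_tsum_le_tsum_norm hsum
    _ ≤ ∑' n, ε n := hsum.tsum_le_tsum (fun n => (hu n).le) hε_summable
    _ = 2 * r := by rw [tsum_mul_left, tsum_geometric_two, mul_comm]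

theorem continuous_of_isClosed_graph_of_barrelledSpace [ContinuousSMul ℝ X]
    [BarrelledSpace ℝ X] [CompleteSpace Z] (hT : IsClosed (T.graph : Set (X × Z))) :
    Continuous T := by
  have hnhds : ∀ r > 0, closure (T ⁻¹' ball 0 r) ∈ 𝓝 0 := fun r hr => by
    simpa [Seminorm.ball_comp, ball_normSeminorm] using
      ((normSeminorm ℝ Z).comp T).closure_ball_zero_mem_nhds hr
  refine continuous_of_continuousAt_zero T ?_
  rw [ContinuousAt, map_zero, nhds_basis_closedBall.tendsto_right_iff]
  intro ε hε
  filter_upwards [hnhds (ε / 2) (half_pos hε)] with x hx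
  simpa [mul_div_cancel₀] using T.closure_preimage_ball_subset hT hnhds (half_pos hε) hx

end ClosedGraph

theorem isClosed_graph_of_mkQ_eq_iff {R X Y : Type*} [Ring R] [AddCommGroup X] [Module R X]
    [TopologicalSpace X] [AddCommGroup Y] [Module R Y] [TopologicalSpace Y]
    [IsTopologicalAddGroup Y] {K : Submodule R Y} (T : X →ₗ[R] Y ⧸ K) {Γ : Set (X × Y)}
    (hΓ : IsClosed Γ) (hT : ∀ x y, T x = K.mkQ y ↔ (x, y) ∈ Γ) :
    IsClosed (T.graph : Set (X × (Y ⧸ K))) := by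
  have hq := ((IsOpenQuotientMap.id (X := X)).prodMap K.isOpenQuotientMap_mkQ).isQuotientMap
  rw [← hq.isClosed_preimage]
  convert hΓ
  ext ⟨x, y⟩
  simp [T.mem_graph_iff, ← hT, eq_comm]

end LinearMap

theorem Submodule.exists_linearMap_mkQ_eq_iff {R M N : Type*} [Ring R] [AddCommGroup M]
    [Module R M] [AddCommGroup N] [Module R N] (Γ : Submodule R (M × N))
    (hdom : ∀ x, ∃ y, (x, y) ∈ Γ) :
    ∃ T : M →ₗ[R] N ⧸ Γ.comap (LinearMap.inr R M N),
      ∀ x y, T x = Submodule.mkQ _ y ↔ (x, y) ∈ Γ := by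
  set K := Γ.comap (LinearMap.inr R M N)
  let f : Γ →ₗ[R] M := (LinearMap.fst R M N).comp Γ.subtype
  let g : Γ →ₗ[R] N ⧸ K := K.mkQ.comp ((LinearMap.snd R M N).comp Γ.subtype)
  have hf : Function.Surjective f := fun x => by
    obtain ⟨y, hy⟩ := hdom x
    exact ⟨⟨(x, y), hy⟩, rfl⟩
  have hfg : LinearMap.ker f ≤ LinearMap.ker g := by
    rintro ⟨⟨x, y⟩, hp⟩ (rfl : x = 0)
    exact (Submodule.Quotient.mk_eq_zero K).2 hp
  let T := (LinearMap.ker f).liftQ g hfg ∘ₗ (f.quotKerEquivOfSurjective hf).symm.toLinearMap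
  have hT : ∀ p : Γ, T (f p) = g p := fun p => by simp [T]
  refine ⟨T, fun x y => ⟨fun h => ?_, fun h => hT ⟨(x, y), h⟩⟩⟩
  obtain ⟨⟨⟨x', y'⟩, hp⟩, rfl⟩ := hf x
  have hy' : y' - y ∈ K := (Submodule.Quotient.eq K).1 ((hT _).symm.trans h)
  show (x', y) ∈ Γ
  simpa using Γ.sub_mem hp hy'

theorem stmt_18_general {X Y : Type*}
    [AddCommGroup X] [Module ℝ X] [TopologicalSpace X] [IsTopologicalAddGroup X]
    [ContinuousSMul ℝ X] [BarrelledSpace ℝ X]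
    [NormedAddCommGroup Y] [NormedSpace ℝ Y] [CompleteSpace Y]
    (Γ : Submodule ℝ (X × Y)) (hclosed : IsClosed (Γ : Set (X × Y)))
    (hdom : ∀ x : X, ∃ y : Y, (x, y) ∈ Γ)
    (B : Set Y) (hB : IsOpen B) :
    IsOpen {x : X | ∃ b ∈ B, (x, b) ∈ Γ} := by
  -- the instance that makes `Y ⧸ K` a Banach space
  have : IsClosed (Γ.comap (LinearMap.inr ℝ X Y) : Set Y) :=
    hclosed.preimage (ContinuousLinearMap.inr ℝ X Y).continuous
  obtain ⟨T, hT⟩ := Γ.exists_linearMap_mkQ_eq_iff hdom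
  have hTcont : Continuous T := T.continuous_of_isClosed_graph_of_barrelledSpace
    (T.isClosed_graph_of_mkQ_eq_iff hclosed hT)
  have hpre : {x : X | ∃ b ∈ B, (x, b) ∈ Γ} = T ⁻¹' (Submodule.mkQ _ '' B) := by
    ext x
    simp only [mem_ofPred_eq, mem_preimage, mem_image, ← hT, eq_comm]
  rw [hpre]
  exact hTcont.isOpen_preimage _ (Submodule.isOpenMap_mkQ _ B hB)

theorem stmt_18 {X Y : Type*}
    [AddCommGroup X] [Module ℝ X] [TopologicalSpace X] [IsTopologicalAddGroup X]
    [ContinuousSMul ℝ X] [LocallyConvexSpace ℝ X] [T2Space X] [BarrelledSpace ℝ X]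
    [NormedAddCommGroup Y] [NormedSpace ℝ Y] [CompleteSpace Y]
    (Γ : Submodule ℝ (X × Y)) (hclosed : IsClosed (Γ : Set (X × Y)))
    (hdom : ∀ x : X, ∃ y : Y, (x, y) ∈ Γ)
    (B : Set Y) (hB : IsOpen B) :
    IsOpen {x : X | ∃ b ∈ B, (x, b) ∈ Γ} :=
  stmt_18_general Γ hclosed hdom B hB
end
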